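/- Conversely, in the unconstrained defensive setting, if there exists an indefinitely extendible safe sequence λ_safe in L(G_v) (an infinite observable sequence all of whose finite prefixes can reach a verifier state in X_{N_v} ∪ X_{NS_v}), then there exists a C-enforceable string-based defensive function D*: for every observable string ω = P(λ) generated by G, the defender can output the prefix of λ_safe of length |ω|, and this output never reveals the occurrence of the secret event. -/
import Mathlib


variable {X E : Type}

def nstep (f : X → E → Set X) (S : Set X) (a : E) : Set X :=
  {y | ∃ x ∈ S, y ∈ f x a}

def nsteps (f : X → E → Set X) (S : Set X) (w : List E) : Set X :=
  w.foldl (nstep f) S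

def lang (f : X → E → Set X) (x0 : X) : Set (List E) :=
  {w | (nsteps f {x0} w).Nonempty}

def proj (obs : E → Bool) (w : List E) : List E := w.filter obs

def ostep [DecidableEq E] (f : X → E → Set X) (obs : E → Bool) (s : E)
    (q : X × Bool) (e : E) : Set (X × Bool) :=
  {p | ∃ w : List E,
    proj obs w = [e] ∧ p.1 ∈ nsteps f {q.1} w ∧ p.2 = (q.2 || decide (s ∈ w))}

def osteps [DecidableEq E] (f : X → E → Set X) (obs : E → Bool) (s : E)
    (S : Set (X × Bool)) (ω : List E) : Set (X × Bool) :=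
  ω.foldl (fun S e => {p | ∃ q ∈ S, p ∈ ostep f obs s q e}) S

abbrev Vst (X : Type) := (X × Bool) × (X × Bool)

def vstep [DecidableEq E] (f : X → E → Set X) (obs : E → Bool) (s : E)
    (q : Vst X) (e : E) : Set (Vst X) :=
  (ostep f obs s q.1 e) ×ˢ (ostep f obs s q.2 e)

def vsteps [DecidableEq E] (f : X → E → Set X) (obs : E → Bool) (s : E)
    (S : Set (Vst X)) (ω : List E) : Set (Vst X) :=
  ω.foldl (fun S e => {p | ∃ q ∈ S, p ∈ vstep f obs s q e}) S

def vinit (x0 : X) : Set (Vst X) := {((x0, false), (x0, false))}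

def sRevealing (f : X → E → Set X) (obs : E → Bool) (s : E) (x0 : X) (lam : List E) : Prop :=
  lam ∈ lang f x0 ∧ s ∈ lam ∧ ∀ lam' ∈ lang f x0, proj obs lam' = proj obs lam → s ∈ lam'

def CEnforceable (f : X → E → Set X) (obs : E → Bool) (s : E) (x0 : X)
    (Dstar : List E → Set (List E)) : Prop :=
  (∀ lam ∈ lang f x0, (Dstar (proj obs lam)).Nonempty) ∧
  ∀ lam, sRevealing f obs s x0 lam →
    ∃ u ∈ lang f x0, s ∉ u ∧ proj obs u ∈ Dstar (proj obs lam) ∧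
      ∀ lam', lam ++ lam' ∈ lang f x0 →
        ∃ u' ∈ lang f x0, s ∉ u' ∧ proj obs u' ∈ Dstar (proj obs (lam ++ lam')) ∧
          proj obs u <+: proj obs u'

lemma nsteps_mono (f : X → E → Set X) {S T : Set X} (h : S ⊆ T) :
    ∀ w, nsteps f S w ⊆ nsteps f T w := by
  intro w
  induction w generalizing S T with
  | nil => exact h
  | cons a w ih =>
    apply ih
    rintro y ⟨x, hx, hxy⟩
    exact ⟨x, h hx, hxy⟩

lemma nsteps_append (f : X → E → Set X) (S : Set X) (u w : List E) :
    nsteps f S (u ++ w) = nsteps f (nsteps f S u) w := by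
  simp [nsteps, List.foldl_append]

lemma side_step [DecidableEq E] {f : X → E → Set X} {obs : E → Bool} {s : E} {x0 : X}
    {q q' : X × Bool} {n : ℕ} {g : ℕ → E}
    (hq' : q' ∈ ostep f obs s q (g n))
    (hIH : q.2 = false → ∃ u, s ∉ u ∧ proj obs u = (List.range n).map g ∧
      q.1 ∈ nsteps f {x0} u)
    (hfalse : q'.2 = false) :
    ∃ u, s ∉ u ∧ proj obs u = (List.range (n + 1)).map g ∧
      q'.1 ∈ nsteps f {x0} u := by
  obtain ⟨w, hw, hmem, hb⟩ := hq'
  rw [hfalse] at hb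
  have hb' := hb.symm
  rw [Bool.or_eq_false_iff] at hb'
  obtain ⟨hq2, hsw⟩ := hb'
  have hsw' : s ∉ w := by simpa using hsw
  obtain ⟨u, hsu, hpu, hxu⟩ := hIH hq2
  refine ⟨u ++ w, ?_, ?_, ?_⟩
  · simp [List.mem_append, hsu, hsw']
  · have hpp : proj obs (u ++ w) = proj obs u ++ proj obs w := by
      simp [proj]
    rw [hpp, hpu, hw, List.range_succ, List.map_append]
    simp
  · rw [nsteps_append]
    exact nsteps_mono f (by simpa using hxu) w hmem

lemma key_lemma [DecidableEq E] (f : X → E → Set X) (obs : E → Bool) (s : E) (x0 : X)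
    (g : ℕ → E) (qp : ℕ → Vst X)
    (h0 : qp 0 = ((x0, false), (x0, false)))
    (hstep : ∀ i : ℕ, qp (i + 1) ∈ vstep f obs s (qp i) (g i)) :
    ∀ n : ℕ,
      ((qp n).1.2 = false → ∃ u, s ∉ u ∧ proj obs u = (List.range n).map g ∧
        (qp n).1.1 ∈ nsteps f {x0} u) ∧
      ((qp n).2.2 = false → ∃ u, s ∉ u ∧ proj obs u = (List.range n).map g ∧
        (qp n).2.1 ∈ nsteps f {x0} u) := by
  intro n
  induction n with
  | zero =>
    rw [h0]
    exact ⟨fun _ => ⟨[], by simp, by simp [proj], by simp [nsteps]⟩,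
           fun _ => ⟨[], by simp, by simp [proj], by simp [nsteps]⟩⟩
  | succ n ih =>
    obtain ⟨h1, h2⟩ := hstep n
    exact ⟨fun hf => side_step h1 ih.1 hf, fun hf => side_step h2 ih.2 hf⟩

lemma exists_safe_string [DecidableEq E] (f : X → E → Set X) (obs : E → Bool) (s : E)
    (x0 : X) (g : ℕ → E) (qp : ℕ → Vst X)
    (h0 : qp 0 = ((x0, false), (x0, false)))
    (hstep : ∀ i : ℕ, qp (i + 1) ∈ vstep f obs s (qp i) (g i))
    (hsafe : ∀ i : ℕ, (qp (i + 1)).1.2 = false ∨ (qp (i + 1)).2.2 = false) :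
    ∀ n : ℕ, ∃ u ∈ lang f x0, s ∉ u ∧ proj obs u = (List.range n).map g := by
  intro n
  have hk := key_lemma f obs s x0 g qp h0 hstep n
  have hor : (qp n).1.2 = false ∨ (qp n).2.2 = false := by
    cases n with
    | zero => left; rw [h0]
    | succ m => exact hsafe m
  rcases hor with h | h
  · obtain ⟨u, hsu, hpu, hxu⟩ := hk.1 h
    exact ⟨u, ⟨_, hxu⟩, hsu, hpu⟩
  · obtain ⟨u, hsu, hpu, hxu⟩ := hk.2 h
    exact ⟨u, ⟨_, hxu⟩, hsu, hpu⟩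

/-- Theorem 2, sufficiency: a safe sequence yields a C-enforceable
defensive function: output the prefix of the safe sequence of matching length. -/
theorem safe_sequence_implies_cenforceable [DecidableEq E]
    (f : X → E → Set X) (obs : E → Bool) (s : E) (x0 : X)
    (g : ℕ → E) (qp : ℕ → Vst X)
    (h0 : qp 0 = ((x0, false), (x0, false)))
    (hstep : ∀ i : ℕ, qp (i + 1) ∈ vstep f obs s (qp i) (g i))
    (hsafe : ∀ i : ℕ, (qp (i + 1)).1.2 = false ∨ (qp (i + 1)).2.2 = false) :
    CEnforceable f obs s x0
      (fun ω => ({(List.range ω.length).map g} : Set (List E))) := by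
  have hex := exists_safe_string f obs s x0 g qp h0 hstep hsafe
  constructor
  · intro lam _
    exact ⟨_, rfl⟩
  · intro lam _
    obtain ⟨u, hu, hsu, hpu⟩ := hex (proj obs lam).length
    refine ⟨u, hu, hsu, by simpa using hpu, ?_⟩
    intro lam' _
    obtain ⟨u', hu', hsu', hpu'⟩ := hex (proj obs (lam ++ lam')).length
    refine ⟨u', hu', hsu', by simpa using hpu', ?_⟩
    rw [hpu, hpu']
    apply List.IsPrefix.map
    apply List.prefix_iff_eq_take.mpr
    rw [List.take_range]
    congr 1
    simp [proj, List.filter_append]
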